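/- The formula ¬((φ⇐ψ) ∧ (ψ⇐φ)) is valid on every Gödel temporal bi-relational model, where ¬χ abbreviates χ⇒⊥ and ⊥ is interpreted as the empty set. -/

import Mathlib

/-- Formulas of the Gödel temporal language. -/
inductive GF where
  | var : Nat → GF
  | and : GF → GF → GF
  | or : GF → GF → GF
  | imp : GF → GF → GF
  | coimp : GF → GF → GF
  | next : GF → GF
  | dia : GF → GF
  | box : GF → GF
deriving DecidableEq

/-- ⊥ := p ⇐ p -/
def GF.bot : GF := .coimp (.var 0) (.var 0)
/-- ⊤ := p ⇒ p -/
def GF.top : GF := .imp (.var 0) (.var 0)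
/-- ¬φ := φ ⇒ ⊥ -/
def GF.neg (φ : GF) : GF := .imp φ .bot
/-- φ ⟺ ψ := (φ⇒ψ) ∧ (ψ⇒φ) -/
def GF.iffF (φ ψ : GF) : GF := .and (.imp φ ψ) (.imp ψ φ)

/-- A Gödel temporal bi-relational model: (W,≤) a linear order, S : T → T,
and a valuation satisfying the standard semantic clauses. -/
structure BiModel where
  W : Type
  T : Type
  [ord : LinearOrder W]
  S : T → T
  val : GF → W → T → Prop
  var_dc : ∀ n w v t, val (.var n) w t → ord.le v w → val (.var n) v t
  and_iff : ∀ φ ψ w t, val (.and φ ψ) w t ↔ (val φ w t ∧ val ψ w t)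
  or_iff : ∀ φ ψ w t, val (.or φ ψ) w t ↔ (val φ w t ∨ val ψ w t)
  imp_iff : ∀ φ ψ w t, val (.imp φ ψ) w t ↔ (∀ v, ord.le v w → val φ v t → val ψ v t)
  coimp_iff : ∀ φ ψ w t, val (.coimp φ ψ) w t ↔ (∃ v, ord.le w v ∧ val φ v t ∧ ¬ val ψ v t)
  next_iff : ∀ φ w t, val (.next φ) w t ↔ val φ w (S t)
  dia_iff : ∀ φ w t, val (.dia φ) w t ↔ (∃ n : ℕ, val φ w (S^[n] t))
  box_iff : ∀ φ w t, val (.box φ) w t ↔ (∀ n : ℕ, val φ w (S^[n] t))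

/-!
Every formula is downward closed in the linear order `W`. If both `φ ⇐ ψ` and `ψ ⇐ φ` held, there
would be worlds `a` with `φ ∧ ¬ψ` and `b` with `ψ ∧ ¬φ`; by linearity one lies below the other,
and downward closure of `ψ` (if `a ≤ b`) or of `φ` (if `b ≤ a`) gives a contradiction. So the
conjunction is empty, and its negation holds everywhere.
-/

namespace BiModel

attribute [instance] BiModel.ord

variable (M : BiModel)

theorem val_of_le (χ : GF) {w v : M.W} {t : M.T} (h : M.val χ w t) (hvw : v ≤ w) :
    M.val χ v t := by
  induction χ generalizing w t with
  | var n => exact M.var_dc n w v t h hvw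
  | and φ ψ ihφ ihψ =>
    rw [M.and_iff] at h ⊢
    exact ⟨ihφ h.1 hvw, ihψ h.2 hvw⟩
  | or φ ψ ihφ ihψ =>
    rw [M.or_iff] at h ⊢
    exact h.imp (ihφ · hvw) (ihψ · hvw)
  | imp φ ψ =>
    rw [M.imp_iff] at h ⊢
    exact fun u huv => h u (le_trans huv hvw)
  | coimp φ ψ =>
    rw [M.coimp_iff] at h ⊢
    obtain ⟨u, hwu, hφ, hψ⟩ := h
    exact ⟨u, le_trans hvw hwu, hφ, hψ⟩
  | next φ ih =>
    rw [M.next_iff] at h ⊢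
    exact ih h hvw
  | dia φ ih =>
    rw [M.dia_iff] at h ⊢
    obtain ⟨n, hn⟩ := h
    exact ⟨n, ih hn hvw⟩
  | box φ ih =>
    rw [M.box_iff] at h ⊢
    exact fun n => ih (h n) hvw

theorem not_val_coimp_of_val_coimp {φ ψ : GF} {w w' : M.W} {t : M.T}
    (h : M.val (.coimp φ ψ) w t) : ¬ M.val (.coimp ψ φ) w' t := by
  rw [M.coimp_iff] at h ⊢
  rintro ⟨b, -, hψb, hφb⟩
  obtain ⟨a, -, hφa, hψa⟩ := h
  rcases le_total a b with hab | hba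
  · exact hψa (M.val_of_le ψ hψb hab)
  · exact hφb (M.val_of_le φ hφa hba)

end BiModel

/-- ¬((φ⇐ψ) ∧ (ψ⇐φ)) is globally true on every bi-relational model. -/
theorem stmt2 (M : BiModel) (φ ψ : GF) (w : M.W) (t : M.T) :
    M.val (GF.neg (.and (.coimp φ ψ) (.coimp ψ φ))) w t := by
  rw [GF.neg, M.imp_iff]
  intro v _ h
  rw [M.and_iff] at h
  exact absurd h.2 (M.not_val_coimp_of_val_coimp h.1)
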